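/- For every natural number k, the generating function identity ∏_{j=0}^{k} (1 - q^{j} x) · ∑_{n ≥ 0} QB_s(n,k) x^{n} = x^{k} q^{k(k-1)/2} ∏_{j=0}^{k-1} (1 + q^{j}x + (q^{j}x)^{2} + ⋯ + (q^{j}x)^{s-1}) holds in the ring of formal power series in x over the field ℚ(q). -/

import Mathlib

/-- The q-quasi-bi^s-nomial coefficients `QB_s(n,k) ∈ ℚ(q)` (here `q = RatFunc.X`). -/
noncomputable def QB (s : ℕ) : ℕ → ℤ → RatFunc ℚ
  | 0, k => if k = 0 then 1 else 0
  | n+1, k =>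
    if k < 0 ∨ (n+1 : ℤ) < k then 0
    else QB s n k +
      ∑ j ∈ Finset.range s, if j ≤ n then RatFunc.X ^ (n - j) * QB s (n - j) (k - 1) else 0
  termination_by n _ => n
  decreasing_by all_goals omega

/-!
Write `F_k = ∑ₙ QB_s(n,k) xⁿ`. The defining recurrence says, coefficientwise, that
`(1 - x) F_k = x (1 + x + ⋯ + x^{s-1}) F_{k-1}(q x)` for `k ≥ 1` and `(1 - x) F_0 = 1`.
Both sides of the identity therefore satisfy the same recursion in `k`: the step `k → k + 1`
substitutes `x ↦ q x` (`PowerSeries.rescale q`) and multiplies by `x (1 + ⋯ + x^{s-1})`,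
while the new factor `1 - x` of the product on the left is absorbed by `F_{k+1}`.
-/

open PowerSeries Finset

section Rescale

variable {R : Type*} [CommRing R]

theorem PowerSeries.rescale_C (a b : R) : rescale a (C b) = C b := by
  ext (_ | n) <;> simp [coeff_C]

theorem PowerSeries.rescale_C_pow_mul_X (a : R) (j : ℕ) :
    rescale a (C (a ^ j) * X) = C (a ^ (j + 1)) * X := by
  rw [map_mul, rescale_C, rescale_X, pow_succ, map_mul]
  ring

theorem PowerSeries.prod_range_succ_one_sub_C_pow_mul_X (a : R) (k : ℕ) :
    ∏ j ∈ range (k + 1), (1 - C (a ^ j) * X) =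
      (1 - X) * rescale a (∏ j ∈ range k, (1 - C (a ^ j) * X)) := by
  rw [prod_range_succ', pow_zero, map_one, one_mul, mul_comm, map_prod]
  simp only [map_sub, map_one, rescale_C_pow_mul_X]

theorem PowerSeries.C_pow_triangle_mul_X_pow_mul_prod_geom_succ (a : R)
    (s k : ℕ) :
    C (a ^ ((k + 1) * (k + 1 - 1) / 2)) * X ^ (k + 1) *
        ∏ j ∈ range (k + 1), ∑ i ∈ range s, (C (a ^ j) * X) ^ i =
      X * (∑ i ∈ range s, X ^ i) *
        rescale a (C (a ^ (k * (k - 1) / 2)) * X ^ k *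
          ∏ j ∈ range k, ∑ i ∈ range s, (C (a ^ j) * X) ^ i) := by
  have hgeom (j : ℕ) : rescale a (∑ i ∈ range s, (C (a ^ j) * X) ^ i) =
      ∑ i ∈ range s, (C (a ^ (j + 1)) * X) ^ i := by
    simp only [map_sum, map_pow (rescale a), rescale_C_pow_mul_X]
  rw [map_mul, map_mul, map_pow (rescale a), rescale_C, rescale_X, map_prod, prod_range_succ' _ k,
    Nat.triangle_succ, pow_add, map_mul, mul_pow, ← map_pow]
  simp only [hgeom, pow_zero, map_one, one_mul]
  ring

end Rescale

theorem QB_eq_zero (s n : ℕ) {k : ℤ} (hk : k < 0 ∨ n < k) : QB s n k = 0 := by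
  cases n with
  | zero => rw [QB, if_neg (by omega)]
  | succ n => rw [QB, if_pos (by push_cast at hk; omega)]

theorem QB_succ (s n : ℕ) {k : ℤ} (hk : 0 ≤ k) :
    QB s (n + 1) k = QB s n k +
      ∑ j ∈ range s, if j ≤ n then RatFunc.X ^ (n - j) * QB s (n - j) (k - 1) else 0 := by
  rw [QB]
  split_ifs with h
  · rw [QB_eq_zero s n (by omega), zero_add, eq_comm]
    refine sum_eq_zero fun j _ => ?_
    split_ifs
    · rw [QB_eq_zero s (n - j) (by omega), mul_zero]
    · rfl
  · rfl

theorem one_sub_X_mul_QB_series (s k : ℕ) :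
    (1 - X : (RatFunc ℚ)⟦X⟧) * PowerSeries.mk (fun n => QB s n k) =
      (if k = 0 then 1 else 0) +
        X * (∑ i ∈ range s, X ^ i) *
          rescale RatFunc.X (PowerSeries.mk fun n => QB s n ((k : ℤ) - 1)) := by
  ext (_ | n)
  · simp [QB]
  · have hcoeff (i : ℕ) :
        coeff n (X ^ i * rescale RatFunc.X (PowerSeries.mk fun m => QB s m ((k : ℤ) - 1))) =
          if i ≤ n then RatFunc.X ^ (n - i) * QB s (n - i) (k - 1) else 0 := by
      rw [coeff_X_pow_mul', rescale_mk, coeff_mk]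
    have hconst : coeff (n + 1) (if k = 0 then (1 : (RatFunc ℚ)⟦X⟧) else 0) = 0 := by
      split_ifs <;> simp
    rw [sub_mul, one_mul, map_sub, map_add, hconst, mul_assoc, coeff_succ_X_mul,
      coeff_succ_X_mul, sum_mul, map_sum, coeff_mk, coeff_mk, QB_succ s n (Nat.cast_nonneg k)]
    simp only [hcoeff]
    ring

theorem one_sub_X_mul_QB_series_zero (s : ℕ) :
    (1 - X : (RatFunc ℚ)⟦X⟧) * PowerSeries.mk (fun n => QB s n 0) = 1 := by
  have hneg : (PowerSeries.mk fun n => QB s n (-1)) = 0 := by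
    ext n
    simp [QB_eq_zero s n (k := -1) (by omega)]
  simpa [hneg] using one_sub_X_mul_QB_series s 0

theorem one_sub_X_mul_QB_series_succ (s k : ℕ) :
    (1 - X : (RatFunc ℚ)⟦X⟧) * PowerSeries.mk (fun n => QB s n ((k + 1 : ℕ) : ℤ)) =
      X * (∑ i ∈ range s, X ^ i) * rescale RatFunc.X (PowerSeries.mk fun n => QB s n k) := by
  simpa using one_sub_X_mul_QB_series s (k + 1)

theorem QB_generating_function_general (s k : ℕ) :
    (∏ j ∈ Finset.range (k + 1),
        (1 - PowerSeries.C (R := RatFunc ℚ) (RatFunc.X ^ j) * PowerSeries.X)) *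
        PowerSeries.mk (fun n => QB s n (k : ℤ)) =
      PowerSeries.C (R := RatFunc ℚ) (RatFunc.X ^ (k * (k - 1) / 2)) *
        (PowerSeries.X : PowerSeries (RatFunc ℚ)) ^ k *
        ∏ j ∈ Finset.range k,
          (∑ i ∈ Finset.range s,
            (PowerSeries.C (R := RatFunc ℚ) (RatFunc.X ^ j) * PowerSeries.X) ^ i) := by
  induction k with
  | zero => simpa using one_sub_X_mul_QB_series_zero s
  | succ k ih =>
    rw [prod_range_succ_one_sub_C_pow_mul_X, C_pow_triangle_mul_X_pow_mul_prod_geom_succ, ← ih,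
      mul_comm (1 - X), mul_assoc, one_sub_X_mul_QB_series_succ, map_mul]
    ring

/-- Generating function of the q-quasi-bi^s-nomial coefficients: in `ℚ(q)[[x]]`,
`∏_{j=0}^{k} (1 - q^j x) ⬝ ∑_{n≥0} QB_s(n,k) x^n
  = x^k q^{k(k-1)/2} ∏_{j=0}^{k-1} (1 + q^j x + (q^j x)² + ⋯ + (q^j x)^{s-1})`. -/
theorem QB_generating_function (s k : ℕ) (hs : 1 ≤ s) :
    (∏ j ∈ Finset.range (k + 1),
        (1 - PowerSeries.C (R := RatFunc ℚ) (RatFunc.X ^ j) * PowerSeries.X)) *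
        PowerSeries.mk (fun n => QB s n (k : ℤ)) =
      PowerSeries.C (R := RatFunc ℚ) (RatFunc.X ^ (k * (k - 1) / 2)) *
        (PowerSeries.X : PowerSeries (RatFunc ℚ)) ^ k *
        ∏ j ∈ Finset.range k,
          (∑ i ∈ Finset.range s,
            (PowerSeries.C (R := RatFunc ℚ) (RatFunc.X ^ j) * PowerSeries.X) ^ i) :=
  QB_generating_function_general s k
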